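/- arXiv:math-ph/0603041 — 4 statements merged into one kernel-verified Lean document; each statement's English description precedes it below -/
import Mathlib

section
/- Let g > 0. For t, q ≠ 0, p real, set Y² := (q·cosh t + p·sinh t)² + 2g²·sinh²t/q², and define G̃_C(t,g) := (1/(3π)) · vol{(q,p) ∈ ℝ² : q ≠ 0, (q·cosh t + p·sinh t)² + (q·sinh t + p·cosh t)² ≤ 3, and 2Y² + p² - q² + 2g²/q² - 2g²/Y² ≤ 3}, where vol denotes two-dimensional Lebesgue measure. Then G̃_C(t,g) ≥ 1 - 2√2·g/3 for every real t. -/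
open MeasureTheory

set_option maxHeartbeats 1000000 in
private lemma slice_vol (g : ℝ) (hg : 0 < g) (v : ℝ) :
    volume {u : ℝ | u ≠ 0 ∧ u ^ 2 + v ^ 2 + 2 * g ^ 2 / u ^ 2 ≤ 3}
      = ENNReal.ofReal (2 * Real.sqrt (3 - 2 * Real.sqrt 2 * g - v ^ 2)) := by
  have h2 : (Real.sqrt 2) ^ 2 = 2 := Real.sq_sqrt (by norm_num)
  have hs2 : (0:ℝ) < Real.sqrt 2 := by positivity
  obtain ⟨m, hm⟩ : ∃ m : ℝ, m = 3 - v ^ 2 := ⟨_, rfl⟩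
  rcases le_or_gt m (2 * Real.sqrt 2 * g) with hcase | hcase
  · have hsub : {u : ℝ | u ≠ 0 ∧ u ^ 2 + v ^ 2 + 2 * g ^ 2 / u ^ 2 ≤ 3}
        ⊆ {Real.sqrt (Real.sqrt 2 * g), -Real.sqrt (Real.sqrt 2 * g)} := by
      rintro u ⟨hu, hle⟩
      have hu2 : (0:ℝ) < u ^ 2 := by positivity
      have h1 : 2 * g ^ 2 ≤ (m - u ^ 2) * u ^ 2 :=
        (div_le_iff₀ hu2).mp (by linarith)
      have hsq : u ^ 2 = Real.sqrt 2 * g := by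
        nlinarith [sq_nonneg (u ^ 2 - Real.sqrt 2 * g), sq_nonneg u]
      have hww : (Real.sqrt (Real.sqrt 2 * g)) ^ 2 = Real.sqrt 2 * g :=
        Real.sq_sqrt (by positivity)
      have := sq_eq_sq_iff_eq_or_eq_neg.mp (hsq.trans hww.symm)
      simpa [Set.mem_insert_iff] using this
    have h0 : Real.sqrt (3 - 2 * Real.sqrt 2 * g - v ^ 2) = 0 :=
      Real.sqrt_eq_zero'.mpr (by linarith)
    rw [h0, mul_zero, ENNReal.ofReal_zero]
    exact measure_mono_null hsub ((Set.to_countable _).measure_zero _)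
  · have hm0 : (0:ℝ) < m := lt_trans (by positivity) hcase
    have h8g : (2 * Real.sqrt 2 * g) ^ 2 = 8 * g ^ 2 := by
      rw [mul_pow, mul_pow, h2]; ring
    have hmsq : 8 * g ^ 2 < m ^ 2 := by
      rw [← h8g]; exact pow_lt_pow_left₀ hcase (by positivity) two_ne_zero
    obtain ⟨D, hD0, hD2⟩ : ∃ D : ℝ, 0 ≤ D ∧ D ^ 2 = m ^ 2 - 8 * g ^ 2 :=
      ⟨Real.sqrt _, Real.sqrt_nonneg _, Real.sq_sqrt (by linarith)⟩
    have hDm : D < m := by nlinarith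
    obtain ⟨a, b, ha0, hab, hsum', habm⟩ :
        ∃ a b : ℝ, 0 < a ∧ a ≤ b ∧ a ^ 2 + b ^ 2 = m ∧ a * b = Real.sqrt 2 * g := by
      refine ⟨Real.sqrt ((m - D) / 2), Real.sqrt ((m + D) / 2),
        Real.sqrt_pos.mpr (by linarith), Real.sqrt_le_sqrt (by linarith), ?_, ?_⟩
      · rw [Real.sq_sqrt (by linarith), Real.sq_sqrt (by linarith)]; ring
      · rw [← Real.sqrt_mul (by linarith),
          show (m - D) / 2 * ((m + D) / 2) = (m ^ 2 - D ^ 2) / 4 by ring, hD2,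
          show (m ^ 2 - (m ^ 2 - 8 * g ^ 2)) / 4 = 2 * g ^ 2 by ring,
          show (2:ℝ) * g ^ 2 = (Real.sqrt 2 * g) ^ 2 by rw [mul_pow, h2],
          Real.sqrt_sq (by positivity)]
    have hb0 : 0 < b := lt_of_lt_of_le ha0 hab
    have hba2 : (b - a) ^ 2 = 3 - 2 * Real.sqrt 2 * g - v ^ 2 := by
      linear_combination hsum' - 2 * habm + hm
    have hsqrt : Real.sqrt (3 - 2 * Real.sqrt 2 * g - v ^ 2) = b - a := by
      rw [← hba2, Real.sqrt_sq (by linarith : (0:ℝ) ≤ b - a)]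
    have e : ∀ u : ℝ, (u ^ 2 - a ^ 2) * (u ^ 2 - b ^ 2)
        = u ^ 2 * u ^ 2 - m * u ^ 2 + 2 * g ^ 2 := by
      intro u
      linear_combination (-(u ^ 2)) * hsum' + (a * b + Real.sqrt 2 * g) * habm
        + g ^ 2 * h2
    have hchar : ∀ u : ℝ, (u ≠ 0 ∧ u ^ 2 + v ^ 2 + 2 * g ^ 2 / u ^ 2 ≤ 3)
        ↔ (a ≤ |u| ∧ |u| ≤ b) := by
      intro u
      have sqle1 : ∀ x y : ℝ, 0 ≤ x → x ^ 2 ≤ y ^ 2 → x ≤ |y| := by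
        intro x y hx h
        have := Real.sqrt_le_sqrt h
        rwa [Real.sqrt_sq hx, Real.sqrt_sq_eq_abs] at this
      have sqle2 : ∀ x y : ℝ, 0 ≤ x → y ^ 2 ≤ x ^ 2 → |y| ≤ x := by
        intro x y hx h
        have := Real.sqrt_le_sqrt h
        rwa [Real.sqrt_sq_eq_abs, Real.sqrt_sq hx] at this
      constructor
      · rintro ⟨hu, hle⟩
        have hu2 : (0:ℝ) < u ^ 2 := by positivity
        have h1 : 2 * g ^ 2 ≤ (m - u ^ 2) * u ^ 2 :=
          (div_le_iff₀ hu2).mp (by linarith)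
        have hquad : (u ^ 2 - a ^ 2) * (u ^ 2 - b ^ 2) ≤ 0 := by
          rw [e u]; nlinarith [h1]
        have hab2 : a ^ 2 ≤ b ^ 2 := by nlinarith
        rcases mul_nonpos_iff.mp hquad with ⟨h7, h8⟩ | ⟨h7, h8⟩
        · exact ⟨sqle1 a u ha0.le (by linarith), sqle2 b u hb0.le (by linarith)⟩
        · exact ⟨sqle1 a u ha0.le (by linarith), sqle2 b u hb0.le (by linarith)⟩
      · rintro ⟨h7, h8⟩
        have hu0 : u ≠ 0 := by
          intro h; rw [h, abs_zero] at h7; linarith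
        have hu2 : (0:ℝ) < u ^ 2 := by positivity
        have hlow : a ^ 2 ≤ u ^ 2 := by
          have := mul_self_le_mul_self ha0.le h7
          rw [abs_mul_abs_self u] at this
          rw [pow_two, pow_two]; exact this
        have hhigh : u ^ 2 ≤ b ^ 2 := by
          have := mul_self_le_mul_self (abs_nonneg u) h8
          rw [abs_mul_abs_self u] at this
          rw [pow_two, pow_two]; exact this
        refine ⟨hu0, ?_⟩
        have hquad : u ^ 2 * u ^ 2 - m * u ^ 2 + 2 * g ^ 2 ≤ 0 := by
          rw [← e u]
          exact mul_nonpos_iff.mpr (Or.inl ⟨by linarith, by linarith⟩)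
        have hdv : 2 * g ^ 2 / u ^ 2 ≤ m - u ^ 2 := by
          rw [div_le_iff₀ hu2]; nlinarith
        linarith
    have hset : {u : ℝ | u ≠ 0 ∧ u ^ 2 + v ^ 2 + 2 * g ^ 2 / u ^ 2 ≤ 3}
        = Set.Icc (-b) (-a) ∪ Set.Icc a b := by
      ext u
      simp only [Set.mem_setOf_eq, Set.mem_union, Set.mem_Icc]
      rw [hchar u]
      rcases le_or_gt 0 u with h5 | h5
      · rw [abs_of_nonneg h5]
        constructor
        · rintro ⟨x, y⟩; right; exact ⟨x, y⟩
        · rintro (⟨x, y⟩ | ⟨x, y⟩) <;> constructor <;> linarith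
      · rw [abs_of_neg h5]
        constructor
        · rintro ⟨x, y⟩; left; constructor <;> linarith
        · rintro (⟨x, y⟩ | ⟨x, y⟩) <;> constructor <;> linarith
    rw [hset, measure_union ?_ measurableSet_Icc, Real.volume_Icc, Real.volume_Icc,
      hsqrt, show -a - -b = b - a by ring,
      ← ENNReal.ofReal_add (by linarith) (by linarith)]
    · congr 1; ring
    · exact Set.disjoint_left.mpr (fun x ⟨_, h1⟩ ⟨h2, _⟩ => by linarith)

set_option maxHeartbeats 1000000 in
private lemma lint_semicircle (A : ℝ) (hA : 0 ≤ A) :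
    ∫⁻ v : ℝ, ENNReal.ofReal (2 * Real.sqrt (A - v ^ 2))
      = ENNReal.ofReal (Real.pi * A) := by
  obtain ⟨R, hR0, hR2⟩ : ∃ R : ℝ, 0 ≤ R ∧ R ^ 2 = A :=
    ⟨Real.sqrt A, Real.sqrt_nonneg _, Real.sq_sqrt hA⟩
  have hcont : Continuous fun v : ℝ => 2 * Real.sqrt (A - v ^ 2) := by fun_prop
  have hsupp : ∀ x : ℝ, x ∉ Set.Icc (-R) R → 2 * Real.sqrt (A - x ^ 2) = 0 := by
    intro x hx
    have h1 : R < |x| := by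
      simp only [Set.mem_Icc, not_and_or, not_le] at hx
      rcases abs_cases x with ⟨h1, h2⟩ | ⟨h1, h2⟩ <;> rcases hx with h | h <;> linarith
    have hx2 : A < x ^ 2 := by
      rw [← hR2, ← sq_abs x]
      exact pow_lt_pow_left₀ h1 hR0 two_ne_zero
    rw [Real.sqrt_eq_zero'.mpr (by linarith), mul_zero]
  have hcs : HasCompactSupport fun v : ℝ => 2 * Real.sqrt (A - v ^ 2) :=
    HasCompactSupport.intro (isCompact_Icc (a := -R) (b := R)) hsupp
  have hint : Integrable fun v : ℝ => 2 * Real.sqrt (A - v ^ 2) :=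
    hcont.integrable_of_hasCompactSupport hcs
  rw [← ofReal_integral_eq_lintegral_ofReal hint
    (Filter.Eventually.of_forall fun v => by positivity)]
  congr 1
  rw [← setIntegral_eq_integral_of_forall_compl_eq_zero hsupp,
    MeasureTheory.integral_Icc_eq_integral_Ioc,
    ← intervalIntegral.integral_of_le (by linarith : -R ≤ R)]
  rcases eq_or_lt_of_le hR0 with hR | hR
  · rw [← hR, show A = 0 by rw [← hR2, ← hR]; ring]
    simp
  · have key : (∫ x in (-R)..R, 2 * Real.sqrt (A - x ^ 2))
        = R * ∫ x in (-1 : ℝ)..1, 2 * Real.sqrt (A - (R * x) ^ 2) := by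
      rw [intervalIntegral.integral_comp_mul_left
        (fun y : ℝ => 2 * Real.sqrt (A - y ^ 2)) hR.ne']
      rw [mul_one, mul_neg_one, smul_eq_mul, ← mul_assoc,
        mul_inv_cancel₀ hR.ne', one_mul]
    have heq : (∫ x in (-1 : ℝ)..1, 2 * Real.sqrt (A - (R * x) ^ 2))
        = ∫ x in (-1 : ℝ)..1, 2 * R * Real.sqrt (1 - x ^ 2) := by
      apply intervalIntegral.integral_congr
      intro x _
      show 2 * Real.sqrt (A - (R * x) ^ 2) = 2 * R * Real.sqrt (1 - x ^ 2)
      rw [show A - (R * x) ^ 2 = R ^ 2 * (1 - x ^ 2) by rw [← hR2]; ring,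
        Real.sqrt_mul (sq_nonneg R), Real.sqrt_sq hR0]
      ring
    rw [key, heq, intervalIntegral.integral_const_mul, integral_sqrt_one_sub_sq, ← hR2]
    ring

private lemma key_id (g q p c s k : ℝ) (hq : q ≠ 0) (hc : c ^ 2 = 1 + s ^ 2)
    (hk : k ≠ 0) (hk2 : k ^ 2 = c ^ 2 + s ^ 2) :
    (k⁻¹ * q) ^ 2 + (2 * c * s / k * q + k * p) ^ 2 + 2 * g ^ 2 / (k⁻¹ * q) ^ 2
      = (q * c + p * s) ^ 2 + (q * s + p * c) ^ 2 + 2 * g ^ 2 * (c ^ 2 + s ^ 2) / q ^ 2 := by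
  linear_combination (norm := (field_simp; ring))
    (-(q ^ 2 * (1 + c ^ 2 - s ^ 2) / k ^ 2)) * hc
      + (p ^ 2 + 2 * g ^ 2 / q ^ 2 - q ^ 2 * (c ^ 2 + s ^ 2) / k ^ 2) * hk2

private lemma id2 (g q p c s : ℝ) (hq : q ≠ 0) (hc : c ^ 2 = 1 + s ^ 2) :
    2 * ((q * c + p * s) ^ 2 + 2 * g ^ 2 * s ^ 2 / q ^ 2) + p ^ 2 - q ^ 2 + 2 * g ^ 2 / q ^ 2
      = (q * c + p * s) ^ 2 + (q * s + p * c) ^ 2 + 2 * g ^ 2 * (c ^ 2 + s ^ 2) / q ^ 2 := by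
  linear_combination (q ^ 2 - p ^ 2 - 2 * g ^ 2 / q ^ 2) * hc

set_option maxHeartbeats 1000000 in
/-- Proposition 6.3, second inequality: the characteristic-function classical
fidelity for the perturbed inverted oscillator satisfies
`G̃_C(t,g) ≥ 1 - 2√2 g/3`. -/
theorem classical_fidelity_IHO_char_lower_bound (g : ℝ) (hg : 0 < g) (t : ℝ) :
    1 - 2 * Real.sqrt 2 * g / 3 ≤
      (1 / (3 * Real.pi)) * (volume {x : ℝ × ℝ | x.1 ≠ 0 ∧
        (x.1 * Real.cosh t + x.2 * Real.sinh t) ^ 2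
          + (x.1 * Real.sinh t + x.2 * Real.cosh t) ^ 2 ≤ 3 ∧
        2 * ((x.1 * Real.cosh t + x.2 * Real.sinh t) ^ 2
            + 2 * g ^ 2 * (Real.sinh t) ^ 2 / x.1 ^ 2)
          + x.2 ^ 2 - x.1 ^ 2 + 2 * g ^ 2 / x.1 ^ 2
          - 2 * g ^ 2 / ((x.1 * Real.cosh t + x.2 * Real.sinh t) ^ 2
              + 2 * g ^ 2 * (Real.sinh t) ^ 2 / x.1 ^ 2) ≤ 3}).toReal := by
  have hπ : (0:ℝ) < Real.pi := Real.pi_pos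
  set c : ℝ := Real.cosh t with hcdef
  set s : ℝ := Real.sinh t with hsdef
  have hc : c ^ 2 = 1 + s ^ 2 := by rw [hcdef, hsdef, Real.cosh_sq]; ring
  have hc0 : (0:ℝ) < c := Real.cosh_pos t
  have hcs0 : (0:ℝ) < c ^ 2 + s ^ 2 := by positivity
  set k : ℝ := Real.sqrt (c ^ 2 + s ^ 2) with hkdef
  have hk2 : k ^ 2 = c ^ 2 + s ^ 2 := Real.sq_sqrt hcs0.le
  have hk0 : (0:ℝ) < k := Real.sqrt_pos.mpr hcs0
  set S : Set (ℝ × ℝ) := {x : ℝ × ℝ | x.1 ≠ 0 ∧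
        (x.1 * c + x.2 * s) ^ 2 + (x.1 * s + x.2 * c) ^ 2 ≤ 3 ∧
        2 * ((x.1 * c + x.2 * s) ^ 2 + 2 * g ^ 2 * s ^ 2 / x.1 ^ 2)
          + x.2 ^ 2 - x.1 ^ 2 + 2 * g ^ 2 / x.1 ^ 2
          - 2 * g ^ 2 / ((x.1 * c + x.2 * s) ^ 2 + 2 * g ^ 2 * s ^ 2 / x.1 ^ 2) ≤ 3}
    with hSdef
  set U : Set (ℝ × ℝ) := {x : ℝ × ℝ | x.1 ≠ 0 ∧
      (x.1 * c + x.2 * s) ^ 2 + (x.1 * s + x.2 * c) ^ 2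
        + 2 * g ^ 2 * (c ^ 2 + s ^ 2) / x.1 ^ 2 ≤ 3} with hUdef
  set V : Set (ℝ × ℝ) := {x : ℝ × ℝ | x.1 ≠ 0 ∧
      x.1 ^ 2 + x.2 ^ 2 + 2 * g ^ 2 / x.1 ^ 2 ≤ 3} with hVdef
  -- U is contained in S
  have hUS : U ⊆ S := by
    rintro x ⟨hq, hle⟩
    have hnn : 0 ≤ 2 * g ^ 2 * (c ^ 2 + s ^ 2) / x.1 ^ 2 := by positivity
    have hynn : 0 ≤ 2 * g ^ 2 / ((x.1 * c + x.2 * s) ^ 2 + 2 * g ^ 2 * s ^ 2 / x.1 ^ 2) := by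
      positivity
    have hid := id2 g x.1 x.2 c s hq hc
    exact ⟨hq, by linarith, by linarith⟩
  -- the linear change of variables
  set M : (ℝ × ℝ) →ₗ[ℝ] (ℝ × ℝ) :=
    Matrix.toLin (Module.Basis.finTwoProd ℝ) (Module.Basis.finTwoProd ℝ) !![k⁻¹, 0; 2 * c * s / k, k]
    with hMdef
  have hdet : LinearMap.det M = 1 := by
    rw [hMdef, LinearMap.det_toLin, Matrix.det_fin_two_of]
    field_simp
    ring
  have hUV : U = ⇑M ⁻¹' V := by
    ext x
    simp only [hUdef, hVdef, Set.mem_setOf_eq, Set.mem_preimage, hMdef,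
      Matrix.toLin_finTwoProd_apply, zero_mul, add_zero]
    constructor
    · rintro ⟨hq, hle⟩
      refine ⟨mul_ne_zero (inv_ne_zero hk0.ne') hq, ?_⟩
      rw [key_id g x.1 x.2 c s k hq hc hk0.ne' hk2]
      exact hle
    · rintro ⟨hq', hle⟩
      have hq : x.1 ≠ 0 := by
        intro h; exact hq' (by rw [h, mul_zero])
      rw [key_id g x.1 x.2 c s k hq hc hk0.ne' hk2] at hle
      exact ⟨hq, hle⟩
  have hVm : MeasurableSet V := by
    have h1 : MeasurableSet {x : ℝ × ℝ | x.1 ≠ 0} :=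
      (measurableSet_eq_fun (measurable_fst) measurable_const).compl
    have h2 : MeasurableSet {x : ℝ × ℝ | x.1 ^ 2 + x.2 ^ 2 + 2 * g ^ 2 / x.1 ^ 2 ≤ 3} := by
      apply measurableSet_le _ measurable_const
      exact ((measurable_fst.pow_const 2).add (measurable_snd.pow_const 2)).add
        (measurable_const.div (measurable_fst.pow_const 2))
    exact h1.inter h2
  have hvolU : volume U = volume V := by
    rw [hUV, MeasureTheory.Measure.addHaar_preimage_linearMap volume
      (by rw [hdet]; exact one_ne_zero) V, hdet]
    simp
  rcases le_or_gt 0 (3 - 2 * Real.sqrt 2 * g) with hA | hA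
  · -- main case
    have hvolV : volume V = ENNReal.ofReal (Real.pi * (3 - 2 * Real.sqrt 2 * g)) := by
      rw [hVdef, MeasureTheory.Measure.volume_eq_prod, Measure.prod_apply_symm (hVdef ▸ hVm)]
      have hsl : ∀ y : ℝ, ((fun x => (x, y)) ⁻¹' {x : ℝ × ℝ | x.1 ≠ 0 ∧
          x.1 ^ 2 + x.2 ^ 2 + 2 * g ^ 2 / x.1 ^ 2 ≤ 3})
          = {u : ℝ | u ≠ 0 ∧ u ^ 2 + y ^ 2 + 2 * g ^ 2 / u ^ 2 ≤ 3} := fun y => rfl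
      calc ∫⁻ y : ℝ, volume ((fun x => (x, y)) ⁻¹' {x : ℝ × ℝ | x.1 ≠ 0 ∧
              x.1 ^ 2 + x.2 ^ 2 + 2 * g ^ 2 / x.1 ^ 2 ≤ 3})
          = ∫⁻ y : ℝ, ENNReal.ofReal (2 * Real.sqrt (3 - 2 * Real.sqrt 2 * g - y ^ 2)) := by
            refine lintegral_congr fun y => ?_
            rw [hsl y]
            exact slice_vol g hg y
        _ = ENNReal.ofReal (Real.pi * (3 - 2 * Real.sqrt 2 * g)) :=
            lint_semicircle (3 - 2 * Real.sqrt 2 * g) hA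
    -- finiteness of the measure of S
    have hSsub : S ⊆ Metric.closedBall (0 : ℝ × ℝ) (Real.sqrt (3 * (c ^ 2 + s ^ 2))) := by
      rintro x ⟨hq, h2, _⟩
      have hx1 : x.1 = (x.1 * c + x.2 * s) * c - (x.1 * s + x.2 * c) * s := by
        linear_combination (-x.1) * hc
      have hx2 : x.2 = (x.1 * s + x.2 * c) * c - (x.1 * c + x.2 * s) * s := by
        linear_combination (-x.2) * hc
      have hb1 : x.1 ^ 2 ≤ 3 * (c ^ 2 + s ^ 2) := by
        nlinarith [sq_nonneg ((x.1 * c + x.2 * s) * s + (x.1 * s + x.2 * c) * c),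
          mul_le_mul_of_nonneg_right h2 hcs0.le]
      have hb2 : x.2 ^ 2 ≤ 3 * (c ^ 2 + s ^ 2) := by
        nlinarith [sq_nonneg ((x.1 * s + x.2 * c) * s + (x.1 * c + x.2 * s) * c),
          mul_le_mul_of_nonneg_right h2 hcs0.le]
      rw [Metric.mem_closedBall, dist_zero_right, Prod.norm_def]
      apply max_le
      · rw [Real.norm_eq_abs]; exact Real.abs_le_sqrt hb1
      · rw [Real.norm_eq_abs]; exact Real.abs_le_sqrt hb2
    have hfin : volume S ≠ ⊤ :=
      (lt_of_le_of_lt (measure_mono hSsub) measure_closedBall_lt_top).ne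
    have hchain : ENNReal.ofReal (Real.pi * (3 - 2 * Real.sqrt 2 * g)) ≤ volume S := by
      rw [← hvolV, ← hvolU]
      exact measure_mono hUS
    have h1 : Real.pi * (3 - 2 * Real.sqrt 2 * g) ≤ (volume S).toReal := by
      calc Real.pi * (3 - 2 * Real.sqrt 2 * g)
          = (ENNReal.ofReal (Real.pi * (3 - 2 * Real.sqrt 2 * g))).toReal :=
            (ENNReal.toReal_ofReal (by positivity)).symm
        _ ≤ (volume S).toReal := ENNReal.toReal_mono hfin hchain
    have heq : (1 / (3 * Real.pi)) * (Real.pi * (3 - 2 * Real.sqrt 2 * g))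
        = 1 - 2 * Real.sqrt 2 * g / 3 := by
      field_simp
    calc 1 - 2 * Real.sqrt 2 * g / 3
        = (1 / (3 * Real.pi)) * (Real.pi * (3 - 2 * Real.sqrt 2 * g)) := heq.symm
      _ ≤ (1 / (3 * Real.pi)) * (volume S).toReal :=
          mul_le_mul_of_nonneg_left h1 (by positivity)
  · -- trivial case
    have h0 : 1 - 2 * Real.sqrt 2 * g / 3 ≤ 0 := by linarith
    refine h0.trans ?_
    have h2 : (0:ℝ) ≤ (volume S).toReal := ENNReal.toReal_nonneg
    positivity
end

section
/- For t, q ≠ 0, p real, set Y² := (q·cosh t + p·sinh t)² + sinh²t/q², and define G_C(t) := (1/π) ∫_{ℝ²} exp( -(1/2)·[ (q·cosh t + p·sinh t)² + (q·sinh t + p·cosh t)² + 2Y² + p² - q² + 1/q² - 1/Y² ] ) dq dp, with the integrand taken to be 0 on the line q = 0. Then G_C(t) ≥ e^{-√2} for every real t. -/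
open MeasureTheory
open Real Set

lemma phi_hasDeriv (b : ℝ) {x : ℝ} (hx : 0 < x) :
    HasDerivAt (fun y : ℝ => y - b / y) (1 + b / x ^ 2) x := by
  have h1 : HasDerivAt (fun y : ℝ => y) 1 x := hasDerivAt_id x
  have h2 : HasDerivAt (fun y : ℝ => b / y) (-(b / x ^ 2)) x := by
    simpa [div_eq_mul_inv, mul_comm] using ((hasDerivAt_inv hx.ne').const_mul b)
  exact (h1.sub h2).congr_deriv (by ring)

lemma phi_injOn {b : ℝ} (hb : 0 < b) : InjOn (fun x : ℝ => x - b / x) (Ioi 0) := by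
  intro x hx y hy hxy
  simp only [mem_Ioi] at hx hy
  simp only at hxy
  have hx0 : x ≠ 0 := hx.ne'
  have hy0 : y ≠ 0 := hy.ne'
  field_simp at hxy
  nlinarith [mul_pos hx hy]

lemma phi_image {b : ℝ} (hb : 0 < b) : (fun x : ℝ => x - b / x) '' (Ioi 0) = univ := by
  apply eq_univ_of_forall
  intro y
  have hr : |y| < Real.sqrt (y ^ 2 + 4 * b) := by
    rw [← Real.sqrt_sq_eq_abs]
    exact Real.sqrt_lt_sqrt (sq_nonneg y) (by linarith)
  have hy1 : -y < Real.sqrt (y ^ 2 + 4 * b) := lt_of_le_of_lt (neg_le_abs y) hr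
  have hx : 0 < (y + Real.sqrt (y ^ 2 + 4 * b)) / 2 := by linarith
  refine ⟨(y + Real.sqrt (y ^ 2 + 4 * b)) / 2, hx, ?_⟩
  have hsq : Real.sqrt (y ^ 2 + 4 * b) ^ 2 = y ^ 2 + 4 * b :=
    Real.sq_sqrt (by positivity)
  simp only
  have hd : (0:ℝ) < y + Real.sqrt (y ^ 2 + 4 * b) := by linarith
  rw [eq_comm, eq_sub_iff_add_eq]
  field_simp [hd.ne']
  rw [show y ^ 2 + b * 4 = y ^ 2 + 4 * b by ring]
  have e : b * 2 / (y + √(y ^ 2 + 4 * b)) = (√(y ^ 2 + 4 * b) - y) / 2 := by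
    rw [div_eq_iff hd.ne']; nlinarith [hsq]
  rw [e]; ring

lemma exp_sq_bound {b k : ℝ} (hb : 0 < b) (hk : 0 < k) (x : ℝ) :
    Real.exp (-(x - b / x) ^ 2 / k) ≤ Real.exp (2 * b / k) * Real.exp (-(1 / k) * x ^ 2) := by
  rw [← Real.exp_add, Real.exp_le_exp]
  have hr : 2 * b / k + -(1 / k) * x ^ 2 = (2 * b - x ^ 2) / k := by ring
  rw [hr]
  rcases eq_or_ne x 0 with h | h
  · simp [h]
    positivity
  · have hx : (x - b / x) ^ 2 = x ^ 2 - 2 * b + (b / x) ^ 2 := by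
      field_simp
      ring
    rw [hx]
    gcongr (?_ : ℝ) / k
    nlinarith [sq_nonneg (b / x)]

lemma measurable_f (b k : ℝ) : Measurable (fun x : ℝ => Real.exp (-(x - b / x) ^ 2 / k)) := by
  have h1 : Measurable (fun x : ℝ => b / x) := measurable_const.div measurable_id
  exact ((((measurable_id.sub h1).pow_const 2).neg.div_const k).exp)

lemma integrableOn_f {b k : ℝ} (hb : 0 < b) (hk : 0 < k) :
    IntegrableOn (fun x : ℝ => Real.exp (-(x - b / x) ^ 2 / k)) (Ioi 0) := by
  have hmaj : Integrable (fun x : ℝ => Real.exp (2 * b / k) * Real.exp (-(1 / k) * x ^ 2)) :=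
    (integrable_exp_neg_mul_sq (by positivity)).const_mul _
  refine (hmaj.mono' (measurable_f b k).aestronglyMeasurable ?_).integrableOn
  filter_upwards with x
  rw [Real.norm_eq_abs, abs_of_pos (Real.exp_pos _)]
  exact exp_sq_bound hb hk x

lemma sub_lemma_A {b k : ℝ} (hb : 0 < b) :
    ∫ y : ℝ, Real.exp (-y ^ 2 / k)
      = ∫ x in Ioi (0:ℝ), |1 + b / x ^ 2| • Real.exp (-(x - b / x) ^ 2 / k) := by
  have := integral_image_eq_integral_abs_deriv_smul (f := fun x : ℝ => x - b / x)
    (f' := fun x : ℝ => 1 + b / x ^ 2) measurableSet_Ioi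
    (fun x hx => (phi_hasDeriv b hx).hasDerivWithinAt) (phi_injOn hb)
    (fun y => Real.exp (-y ^ 2 / k))
  rw [phi_image hb, MeasureTheory.setIntegral_univ] at this
  exact this

lemma psi_image {b : ℝ} (hb : 0 < b) : (fun x : ℝ => b / x) '' (Ioi 0) = Ioi 0 := by
  ext y
  constructor
  · rintro ⟨x, hx, rfl⟩
    exact div_pos hb hx
  · intro hy
    exact ⟨b / y, div_pos hb hy, by field_simp⟩

lemma psi_injOn {b : ℝ} (hb : 0 < b) : InjOn (fun x : ℝ => b / x) (Ioi 0) := by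
  intro x hx y hy hxy
  simp only [mem_Ioi] at hx hy
  simp only at hxy
  field_simp at hxy
  exact hxy.symm

lemma psi_hasDeriv (b : ℝ) {x : ℝ} (hx : 0 < x) :
    HasDerivAt (fun y : ℝ => b / y) (-(b / x ^ 2)) x := by
  simpa [div_eq_mul_inv, mul_comm] using ((hasDerivAt_inv hx.ne').const_mul b)

lemma sub_lemma_B {b k : ℝ} (hb : 0 < b) :
    ∫ x in Ioi (0:ℝ), |(-(b / x ^ 2))| • Real.exp (-(x - b / x) ^ 2 / k)
      = ∫ y in Ioi (0:ℝ), Real.exp (-(y - b / y) ^ 2 / k) := by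
  have key := integral_image_eq_integral_abs_deriv_smul (f := fun x : ℝ => b / x)
    (f' := fun x : ℝ => -(b / x ^ 2)) measurableSet_Ioi
    (fun x hx => (psi_hasDeriv b hx).hasDerivWithinAt) (psi_injOn hb)
    (fun y => Real.exp (-(y - b / y) ^ 2 / k))
  rw [psi_image hb] at key
  rw [key]
  apply MeasureTheory.setIntegral_congr_fun measurableSet_Ioi
  intro x hx
  simp only [mem_Ioi] at hx
  simp only
  have h1 : b / (b / x) = x := by field_simp
  rw [h1]
  congr 1
  ring

lemma integrableOn_g2 {b k : ℝ} (hb : 0 < b) (hk : 0 < k) :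
    IntegrableOn (fun x : ℝ => |(-(b / x ^ 2))| • Real.exp (-(x - b / x) ^ 2 / k)) (Ioi 0) := by
  have key := integrableOn_image_iff_integrableOn_abs_deriv_smul (f := fun x : ℝ => b / x)
    (f' := fun x : ℝ => -(b / x ^ 2)) measurableSet_Ioi
    (fun x hx => (psi_hasDeriv b hx).hasDerivWithinAt) (psi_injOn hb)
    (fun y => Real.exp (-(y - b / y) ^ 2 / k))
  rw [psi_image hb] at key
  have h2 := key.mp (integrableOn_f hb hk)
  apply h2.congr_fun _ measurableSet_Ioi
  intro x hx
  simp only [mem_Ioi] at hx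
  simp only
  have h1 : b / (b / x) = x := by field_simp
  rw [h1]
  congr 2
  ring

lemma J_val {b k : ℝ} (hb : 0 < b) (hk : 0 < k) :
    ∫ x in Ioi (0:ℝ), Real.exp (-(x - b / x) ^ 2 / k) = Real.sqrt (π * k) / 2 := by
  have hgauss : ∫ y : ℝ, Real.exp (-y ^ 2 / k) = Real.sqrt (π * k) := by
    have h := integral_gaussian (1 / k)
    have h2 : ∀ y : ℝ, -(1 / k) * y ^ 2 = -y ^ 2 / k := fun y => by ring
    simp_rw [h2] at h
    rw [h]
    congr 1
    field_simp
  have habs : ∀ x ∈ Ioi (0:ℝ),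
      |1 + b / x ^ 2| • Real.exp (-(x - b / x) ^ 2 / k)
        = Real.exp (-(x - b / x) ^ 2 / k) + |(-(b / x ^ 2))| • Real.exp (-(x - b / x) ^ 2 / k) := by
    intro x hx
    simp only [mem_Ioi] at hx
    have h1 : (0:ℝ) < b / x ^ 2 := by positivity
    rw [abs_of_pos (by linarith), abs_neg, abs_of_pos h1, smul_eq_mul, smul_eq_mul]
    ring
  have hsplit : ∫ x in Ioi (0:ℝ), |1 + b / x ^ 2| • Real.exp (-(x - b / x) ^ 2 / k)
      = (∫ x in Ioi (0:ℝ), Real.exp (-(x - b / x) ^ 2 / k))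
        + ∫ x in Ioi (0:ℝ), |(-(b / x ^ 2))| • Real.exp (-(x - b / x) ^ 2 / k) := by
    rw [← MeasureTheory.integral_add (integrableOn_f hb hk) (integrableOn_g2 hb hk)]
    exact MeasureTheory.setIntegral_congr_fun measurableSet_Ioi habs
  have := (sub_lemma_A hb (k := k)).trans hsplit
  rw [sub_lemma_B hb, hgauss] at this
  linarith

lemma L4 {k : ℝ} (hk : 0 < k) :
    ∫ x in Ioi (0:ℝ), Real.exp (-(x ^ 2 / k + (k / 2) / x ^ 2))
      = Real.exp (-Real.sqrt 2) * (Real.sqrt (π * k) / 2) := by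
  have hr0 : (0:ℝ) < Real.sqrt 2 := Real.sqrt_pos.mpr (by norm_num)
  have hr : Real.sqrt 2 ^ 2 = 2 := Real.sq_sqrt (by norm_num)
  have hb : 0 < k / Real.sqrt 2 := div_pos hk hr0
  have hpt : ∀ x ∈ Ioi (0:ℝ), Real.exp (-(x ^ 2 / k + (k / 2) / x ^ 2))
      = Real.exp (-Real.sqrt 2) * Real.exp (-(x - (k / Real.sqrt 2) / x) ^ 2 / k) := by
    intro x hx
    simp only [mem_Ioi] at hx
    rw [← Real.exp_add]
    congr 1
    set r := Real.sqrt 2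
    field_simp
    ring_nf
    linear_combination (2 * x ^ 2 * k * r - k ^ 2) * hr
  rw [MeasureTheory.setIntegral_congr_fun measurableSet_Ioi hpt,
    MeasureTheory.integral_const_mul, J_val hb hk]

lemma measurable_L5 (k : ℝ) : Measurable (fun x : ℝ => Real.exp (-(x ^ 2 / k + (k / 2) / x ^ 2))) := by
  have h1 : Measurable (fun x : ℝ => (k / 2) / x ^ 2) :=
    measurable_const.div (measurable_id.pow_const 2)
  exact (((measurable_id.pow_const 2).div_const k).add h1).neg.exp

lemma integrable_L5 {k : ℝ} (hk : 0 < k) :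
    Integrable (fun x : ℝ => Real.exp (-(x ^ 2 / k + (k / 2) / x ^ 2))) := by
  have hmaj : Integrable (fun x : ℝ => Real.exp (-(1 / k) * x ^ 2)) :=
    integrable_exp_neg_mul_sq (by positivity)
  refine hmaj.mono' (measurable_L5 k).aestronglyMeasurable ?_
  filter_upwards with x
  rw [Real.norm_eq_abs, abs_of_pos (Real.exp_pos _), Real.exp_le_exp]
  have h1 : 0 ≤ (k / 2) / x ^ 2 := by positivity
  have h2 : -(1 / k) * x ^ 2 = -(x ^ 2 / k) := by ring
  rw [h2]
  linarith

lemma L5 {k : ℝ} (hk : 0 < k) :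
    ∫ x : ℝ, Real.exp (-(x ^ 2 / k + (k / 2) / x ^ 2))
      = Real.exp (-Real.sqrt 2) * Real.sqrt (π * k) := by
  have hint := integrable_L5 hk
  have hsplit := intervalIntegral.integral_Iic_add_Ioi (b := (0:ℝ))
    hint.integrableOn hint.integrableOn
  have heven : ∫ x in Iic (0:ℝ), Real.exp (-(x ^ 2 / k + (k / 2) / x ^ 2))
      = ∫ x in Ioi (0:ℝ), Real.exp (-(x ^ 2 / k + (k / 2) / x ^ 2)) := by
    have h2 := integral_comp_neg_Iic (0:ℝ)
      (fun x => Real.exp (-(x ^ 2 / k + (k / 2) / x ^ 2)))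
    rw [neg_zero] at h2
    rw [← h2]
    simp only [neg_sq]
  rw [heven] at hsplit
  rw [← hsplit, L4 hk]
  ring

lemma key_poly {c s q p : ℝ} (hc : c ^ 2 = 1 + s ^ 2) (hs : s ≠ 0) (hq : q ≠ 0) :
    q ^ 4 ≤ (((q * c + p * s) ^ 2 + (q * s + p * c) ^ 2) * q ^ 2 + (2 * s ^ 2 + 1))
      * ((q * c + p * s) ^ 2 * q ^ 2 + s ^ 2) := by
  have hid : (2 * s ^ 2 + 1) * s ^ 2 *
      ((((q * c + p * s) ^ 2 + (q * s + p * c) ^ 2) * q ^ 2 + (2 * s ^ 2 + 1))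
        * ((q * c + p * s) ^ 2 * q ^ 2 + s ^ 2) - q ^ 4)
      = ((2 * s ^ 2 + 1) * ((q * c + p * s) * q) ^ 2 - c * q ^ 2 * ((q * c + p * s) * q)
          + (2 * s ^ 2 + 1) * s ^ 2) ^ 2
        + (s * q ^ 2 * ((q * c + p * s) * q)) ^ 2 := by
    linear_combination (q^2*p^2*s^4 + 2*q^2*p^2*s^6 + q^4*s^2 + q^4*s^4 - 2*q^4*s^6
      + q^4*p^4*s^4 + 2*q^4*p^4*s^6 + 2*q^5*p^3*c*s^3 + 4*q^5*p^3*c*s^5 + q^6*p^2*s^4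
      - 2*q^6*p^2*s^6 + q^6*p^2*c^2*s^2 + 2*q^6*p^2*c^2*s^4 + 2*q^7*p*c*s^3
      - 4*q^7*p*c*s^5 + q^8*c^2*s^2 - 2*q^8*c^2*s^4) * hc
  have hpos : (0:ℝ) < (2 * s ^ 2 + 1) * s ^ 2 := by positivity
  nlinarith [sq_nonneg ((2 * s ^ 2 + 1) * ((q * c + p * s) * q) ^ 2
      - c * q ^ 2 * ((q * c + p * s) * q) + (2 * s ^ 2 + 1) * s ^ 2),
    sq_nonneg (s * q ^ 2 * ((q * c + p * s) * q))]

lemma inv_Y2_le {c s q p : ℝ} (hc : c ^ 2 = 1 + s ^ 2) (hq : q ≠ 0) :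
    1 / ((q * c + p * s) ^ 2 + s ^ 2 / q ^ 2)
      ≤ (q * c + p * s) ^ 2 + (q * s + p * c) ^ 2 + (2 * s ^ 2 + 1) / q ^ 2 := by
  have hq2 : (0:ℝ) < q ^ 2 := by positivity
  rcases eq_or_ne s 0 with hs | hs
  · subst hs
    have hc1 : c ^ 2 = 1 := by linarith [hc]
    have h1 : (q * c + p * 0) ^ 2 = q ^ 2 := by
      rw [mul_zero, add_zero, mul_pow, hc1, mul_one]
    rw [h1]
    have h2 : (0:ℝ) ^ 2 / q ^ 2 = 0 := by simp
    rw [h2, add_zero]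
    have h3 : 1 / q ^ 2 ≤ (2 * (0:ℝ) ^ 2 + 1) / q ^ 2 := by norm_num
    nlinarith [sq_nonneg (q * 0 + p * c), one_div_nonneg.mpr hq2.le]
  · have hY : (0:ℝ) < (q * c + p * s) ^ 2 + s ^ 2 / q ^ 2 := by positivity
    rw [div_le_iff₀ hY]
    have key := key_poly (p := p) hc hs hq
    have hexp : ((q * c + p * s) ^ 2 + (q * s + p * c) ^ 2 + (2 * s ^ 2 + 1) / q ^ 2)
        * ((q * c + p * s) ^ 2 + s ^ 2 / q ^ 2)
        = ((((q * c + p * s) ^ 2 + (q * s + p * c) ^ 2) * q ^ 2 + (2 * s ^ 2 + 1))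
          * ((q * c + p * s) ^ 2 * q ^ 2 + s ^ 2)) / q ^ 4 := by
      field_simp
    rw [hexp, le_div_iff₀ (by positivity)]
    linarith [key]

lemma eps_bound {c s q p : ℝ} (hcpos : 0 < c) :
    (c - |s|) ^ 2 * (q ^ 2 + p ^ 2) ≤ (q * c + p * s) ^ 2 + (q * s + p * c) ^ 2 := by
  rcases le_or_gt 0 s with hs | hs
  · rw [abs_of_nonneg hs]
    nlinarith [mul_nonneg (mul_nonneg hcpos.le hs) (sq_nonneg (q + p))]
  · rw [abs_of_neg hs]
    nlinarith [mul_nonneg (mul_nonneg hcpos.le (neg_nonneg.mpr hs.le)) (sq_nonneg (q - p))]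

lemma exponent_eq {c s q p w : ℝ} (hc : c ^ 2 = 1 + s ^ 2) (hq : q ≠ 0) :
    (1/2) * ((q*c+p*s)^2 + (q*s+p*c)^2 + 2*((q*c+p*s)^2 + s^2/q^2) + p^2 - q^2 + 1/q^2 - w)
      = ((2*s^2+1) * (p + (2*c*s)*q/(2*s^2+1))^2
          + (q^2/(2*s^2+1) + ((2*s^2+1)/2)/q^2)) - (1/2)*w := by
  have hK : (2*s^2+1 : ℝ) ≠ 0 := by positivity
  field_simp
  ring_nf
  linear_combination (q^2*p^2*(1+2*s^2) + q^4*(3-2*s^2)) * hc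

lemma A_eq {c s q p : ℝ} (hc : c ^ 2 = 1 + s ^ 2) :
    (2*s^2+1) * (p + (2*c*s)*q/(2*s^2+1))^2 + q^2/(2*s^2+1)
      = (q*c+p*s)^2 + (q*s+p*c)^2 := by
  have hK : (2*s^2+1 : ℝ) ≠ 0 := by positivity
  field_simp
  ring_nf
  linear_combination (-p^2*(2*s^2+1) + q^2*(2*s^2-1)) * hc


/-- Proposition 6.5(i), first bound: the rescaled Gaussian classical fidelity
for the inverted oscillator satisfies `G_C(t) ≥ e^{-√2}`. -/
theorem classical_fidelity_IHO_rescaled_lower_bound (t : ℝ) :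
    Real.exp (- Real.sqrt 2) ≤
      (1 / Real.pi) * ∫ x : ℝ × ℝ,
        (if x.1 = 0 then 0 else
          Real.exp (-(1 / 2) *
            ((x.1 * Real.cosh t + x.2 * Real.sinh t) ^ 2
              + (x.1 * Real.sinh t + x.2 * Real.cosh t) ^ 2
              + 2 * ((x.1 * Real.cosh t + x.2 * Real.sinh t) ^ 2
                  + (Real.sinh t) ^ 2 / x.1 ^ 2)
              + x.2 ^ 2 - x.1 ^ 2 + 1 / x.1 ^ 2
              - 1 / ((x.1 * Real.cosh t + x.2 * Real.sinh t) ^ 2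
                  + (Real.sinh t) ^ 2 / x.1 ^ 2)))) := by
  set c := Real.cosh t with hcdef
  set s := Real.sinh t with hsdef
  have hc : c ^ 2 = 1 + s ^ 2 := by rw [hcdef, hsdef, Real.cosh_sq]; ring
  have hcpos : 0 < c := Real.cosh_pos t
  set K := 2 * s ^ 2 + 1 with hKdef
  have hK : 0 < K := by positivity
  have habs : |s| < c := by nlinarith [abs_nonneg s, sq_abs s]
  set ε := (c - |s|) ^ 2 with hεdef
  have hε : 0 < ε := by rw [hεdef]; exact pow_pos (by linarith) 2
  set F : ℝ × ℝ → ℝ := fun x => if x.1 = 0 then 0 else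
    Real.exp (-(1 / 2) *
      ((x.1 * c + x.2 * s) ^ 2 + (x.1 * s + x.2 * c) ^ 2
        + 2 * ((x.1 * c + x.2 * s) ^ 2 + s ^ 2 / x.1 ^ 2)
        + x.2 ^ 2 - x.1 ^ 2 + 1 / x.1 ^ 2
        - 1 / ((x.1 * c + x.2 * s) ^ 2 + s ^ 2 / x.1 ^ 2))) with hFdef
  set H : ℝ × ℝ → ℝ := fun x => if x.1 = 0 then 0 else
    Real.exp (-(K * (x.2 + 2 * c * s * x.1 / K) ^ 2))
      * Real.exp (-(x.1 ^ 2 / K + (K / 2) / x.1 ^ 2)) with hHdef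
  set B : ℝ × ℝ → ℝ := fun x =>
    Real.exp (-(ε / 2) * x.1 ^ 2) * Real.exp (-(ε / 2) * x.2 ^ 2) with hBdef
  -- pointwise bounds
  have hP1 : ∀ x : ℝ × ℝ, H x ≤ F x := by
    intro x
    by_cases h0 : x.1 = 0
    · simp [hHdef, hFdef, h0]
    · simp only [hHdef, hFdef, if_neg h0]
      rw [← Real.exp_add, Real.exp_le_exp]
      have hw : 0 ≤ 1 / ((x.1 * c + x.2 * s) ^ 2 + s ^ 2 / x.1 ^ 2) := by positivity
      have hee := exponent_eq (c := c) (s := s) (q := x.1) (p := x.2)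
        (w := 1 / ((x.1 * c + x.2 * s) ^ 2 + s ^ 2 / x.1 ^ 2)) hc h0
      rw [← hKdef] at hee
      linarith [hee, hw]
  have hP2 : ∀ x : ℝ × ℝ, F x ≤ B x := by
    intro x
    by_cases h0 : x.1 = 0
    · simp only [hFdef, hBdef, if_pos h0]
      positivity
    · simp only [hFdef, hBdef, if_neg h0]
      rw [← Real.exp_add, Real.exp_le_exp]
      have hee := exponent_eq (c := c) (s := s) (q := x.1) (p := x.2)
        (w := 1 / ((x.1 * c + x.2 * s) ^ 2 + s ^ 2 / x.1 ^ 2)) hc h0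
      have hA := A_eq (c := c) (s := s) (q := x.1) (p := x.2) hc
      have hinv := inv_Y2_le (c := c) (s := s) (q := x.1) (p := x.2) hc h0
      have heps := eps_bound (c := c) (s := s) (q := x.1) (p := x.2) hcpos
      rw [← hKdef] at hee hA hinv
      rw [← hεdef] at heps
      have hdiv : (K / 2) / x.1 ^ 2 = (1 / 2) * (K / x.1 ^ 2) := by ring
      linarith [hee, hA, hinv, heps, hdiv]
  have hFnn : ∀ x : ℝ × ℝ, 0 ≤ F x := by
    intro x
    by_cases h0 : x.1 = 0
    · simp [hFdef, h0]
    · simp only [hFdef, if_neg h0]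
      exact (Real.exp_pos _).le
  have hHnn : ∀ x : ℝ × ℝ, 0 ≤ H x := by
    intro x
    by_cases h0 : x.1 = 0
    · simp [hHdef, h0]
    · simp only [hHdef, if_neg h0]
      positivity
  -- measurability
  have hset : MeasurableSet {x : ℝ × ℝ | x.1 = 0} :=
    (measurableSet_singleton (0 : ℝ)).preimage measurable_fst
  have hmu : Measurable fun x : ℝ × ℝ => x.1 * c + x.2 * s :=
    (measurable_fst.mul_const c).add (measurable_snd.mul_const s)
  have hmv : Measurable fun x : ℝ × ℝ => x.1 * s + x.2 * c :=
    (measurable_fst.mul_const s).add (measurable_snd.mul_const c)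
  have hmY : Measurable fun x : ℝ × ℝ => (x.1 * c + x.2 * s) ^ 2 + s ^ 2 / x.1 ^ 2 :=
    (hmu.pow_const 2).add (measurable_const.div (measurable_fst.pow_const 2))
  have hmF : Measurable F := by
    apply Measurable.ite hset measurable_const
    apply Measurable.exp
    apply Measurable.const_mul
    exact ((((((hmu.pow_const 2).add (hmv.pow_const 2)).add
      (hmY.const_mul 2)).add (measurable_snd.pow_const 2)).sub
      (measurable_fst.pow_const 2)).add
      (measurable_const.div (measurable_fst.pow_const 2))).sub
      (measurable_const.div hmY)
  have hmH : Measurable H := by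
    apply Measurable.ite hset measurable_const
    apply Measurable.mul
    · exact (((measurable_snd.add ((measurable_fst.const_mul (2 * c * s)).div_const K)).pow_const 2).const_mul K).neg.exp
    · exact (((measurable_fst.pow_const 2).div_const K).add
        (measurable_const.div (measurable_fst.pow_const 2))).neg.exp
  -- integrability
  have hε2 : 0 < ε / 2 := by positivity
  have hBint : Integrable B := by
    have h := (integrable_exp_neg_mul_sq hε2).mul_prod (integrable_exp_neg_mul_sq hε2)
    rwa [← MeasureTheory.Measure.volume_eq_prod] at h
  have hFint : Integrable F := by
    refine hBint.mono' hmF.aestronglyMeasurable ?_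
    filter_upwards with x
    rw [Real.norm_eq_abs, abs_of_nonneg (hFnn x)]
    exact hP2 x
  have hHint : Integrable H := by
    refine hBint.mono' hmH.aestronglyMeasurable ?_
    filter_upwards with x
    rw [Real.norm_eq_abs, abs_of_nonneg (hHnn x)]
    exact le_trans (hP1 x) (hP2 x)
  -- value of ∫ H
  have hHprod : Integrable H ((volume : Measure ℝ).prod volume) := by
    rwa [← MeasureTheory.Measure.volume_eq_prod]
  have hHval : ∫ x : ℝ × ℝ, H x = Real.exp (-Real.sqrt 2) * π := by
    have h1 : ∫ x : ℝ × ℝ, H x = ∫ q : ℝ, ∫ p : ℝ, H (q, p) := by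
      rw [MeasureTheory.Measure.volume_eq_prod]
      exact MeasureTheory.integral_prod H hHprod
    have houter : ∫ q : ℝ, (∫ p : ℝ, H (q, p))
        = ∫ q : ℝ, Real.sqrt (π / K) * Real.exp (-(q ^ 2 / K + (K / 2) / q ^ 2)) := by
      apply MeasureTheory.integral_congr_ae
      have h0 : ∀ᵐ (q : ℝ), q ≠ 0 := by
        have hsing : {q : ℝ | ¬ q ≠ 0} = {0} := by ext q; simp
        rw [MeasureTheory.ae_iff, hsing]
        exact MeasureTheory.measure_singleton 0
      filter_upwards [h0] with q hq
      simp only [hHdef, if_neg hq]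
      rw [MeasureTheory.integral_mul_const]
      have hshift := MeasureTheory.integral_add_right_eq_self (μ := volume)
        (fun y : ℝ => Real.exp (-(K * y ^ 2))) (2 * c * s * q / K)
      rw [hshift]
      have hgauss : ∫ y : ℝ, Real.exp (-(K * y ^ 2)) = Real.sqrt (π / K) := by
        simp_rw [← neg_mul]
        exact integral_gaussian K
      rw [hgauss, mul_comm]
    rw [h1, houter, MeasureTheory.integral_const_mul, L5 hK]
    have hsq : Real.sqrt (π / K) * Real.sqrt (π * K) = π := by
      rw [← Real.sqrt_mul (by positivity)]
      rw [show π / K * (π * K) = π ^ 2 by field_simp]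
      exact Real.sqrt_sq Real.pi_pos.le
    calc Real.sqrt (π / K) * (Real.exp (-Real.sqrt 2) * Real.sqrt (π * K))
        = (Real.sqrt (π / K) * Real.sqrt (π * K)) * Real.exp (-Real.sqrt 2) := by ring
      _ = Real.exp (-Real.sqrt 2) * π := by rw [hsq]; ring
  -- conclusion
  have hmono : ∫ x : ℝ × ℝ, H x ≤ ∫ x : ℝ × ℝ, F x :=
    MeasureTheory.integral_mono hHint hFint hP1
  have hπ : (0 : ℝ) < π := Real.pi_pos
  have hfinal : Real.exp (-Real.sqrt 2) * π ≤ ∫ x : ℝ × ℝ, F x := by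
    rw [← hHval]; exact hmono
  calc Real.exp (-Real.sqrt 2)
      = (1 / π) * (Real.exp (-Real.sqrt 2) * π) := by field_simp
    _ ≤ (1 / π) * ∫ x : ℝ × ℝ, F x := by
        apply mul_le_mul_of_nonneg_left hfinal (by positivity)
end

section
/- For t, q ≠ 0, p real, set Y² := (q·cosh t + p·sinh t)² + sinh²t/q², and define G̃_C(t) := (1/(3π)) · vol{(q,p) ∈ ℝ² : q ≠ 0, (q·cosh t + p·sinh t)² + (q·sinh t + p·cosh t)² ≤ 3, and 2Y² + p² - q² + 1/q² - 1/Y² ≤ 3}, where vol denotes two-dimensional Lebesgue measure. Then G̃_C(t) ≥ 1/3 for every real t. -/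
open MeasureTheory Set

set_option maxHeartbeats 1000000

private lemma sq_pos_of_ne' {a : ℝ} (h : a ≠ 0) : 0 < a ^ 2 :=
  (sq_nonneg a).lt_of_ne (Ne.symm (pow_ne_zero 2 h))

private lemma eq_one_of_sq' {c : ℝ} (h : 0 < c) (h2 : c^2 = 1) : c = 1 := by nlinarith

private lemma gmax' {u x v : ℝ} (hu : 0 < u) (hux : u ≤ x) (hxv : x ≤ v) :
    x + 1/x ≤ max (u + 1/u) (v + 1/v) := by
  have hx : 0 < x := hu.trans_le hux
  have hv : 0 < v := hx.trans_le hxv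
  rcases le_or_gt (x*u) 1 with h | h
  · apply le_max_of_le_left
    have key : u + 1/u - (x + 1/x) = (x-u)*(1-x*u)/(x*u) := by field_simp; ring
    have h2 : 0 ≤ (x-u)*(1-x*u)/(x*u) :=
      div_nonneg (mul_nonneg (by linarith) (by linarith)) (by positivity)
    linarith
  · apply le_max_of_le_right
    have hxv1 : 1 ≤ x*v := by nlinarith
    have key : v + 1/v - (x + 1/x) = (v-x)*(x*v-1)/(x*v) := by field_simp; ring
    have h2 : 0 ≤ (v-x)*(x*v-1)/(x*v) :=
      div_nonneg (mul_nonneg (by linarith) (by linarith)) (by positivity)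
    linarith

private lemma rect_mem' {a b h u v : ℝ} (ha : 0 < a)
    (h2 : a^2 + 1/a^2 + h^2 ≤ 16/5) (h3 : b^2 + 1/b^2 + h^2 ≤ 16/5)
    (h4 : b^2 + h^2 ≤ 3) (hu : a < u) (hub : u ≤ b) (hv : v^2 ≤ h^2) :
    u^2 + v^2 ≤ 3 ∧ 1 ≤ u^2 * (16/5 - u^2 - v^2) := by
  have hu0 : 0 < u := ha.trans hu
  have hsq : u^2 + 1/u^2 ≤ max (a^2 + 1/a^2) (b^2 + 1/b^2) :=
    gmax' (by positivity) (by nlinarith) (by nlinarith)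
  have hm : max (a^2 + 1/a^2) (b^2 + 1/b^2) ≤ 16/5 - h^2 :=
    max_le (by linarith) (by linarith)
  have hb2 : u^2 ≤ b^2 := by nlinarith
  refine ⟨by nlinarith, ?_⟩
  have h6 : 1/u^2 ≤ 16/5 - u^2 - v^2 := by linarith
  calc (1:ℝ) = u^2 * (1/u^2) := by field_simp
  _ ≤ u^2 * (16/5 - u^2 - v^2) := mul_le_mul_of_nonneg_left h6 (by positivity)

private lemma mem_target_core' {c s r q p u v : ℝ}
    (hcs : c^2 - s^2 = 1) (hcpos : 0 < c) (hr2 : r^2 = c^2 + s^2) (hrpos : 0 < r)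
    (hru : r * u = q)
    (hrv : r * v = 2*c*s*q + (c^2 + s^2)*p)
    (h1 : u^2 + v^2 ≤ 3) (h2 : 1 ≤ u^2 * (16/5 - u^2 - v^2)) :
    q ≠ 0 ∧
    (q * c + p * s) ^ 2 + (q * s + p * c) ^ 2 ≤ 3 ∧
    2 * ((q * c + p * s) ^ 2 + s ^ 2 / q ^ 2) + p ^ 2 - q ^ 2 + 1 / q ^ 2
      - 1 / ((q * c + p * s) ^ 2 + s ^ 2 / q ^ 2) ≤ 3 := by
  have hu0 : u ≠ 0 := by
    rintro rfl; simp at h2; linarith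
  have hq0 : q ≠ 0 := by
    rw [← hru]; exact mul_ne_zero hrpos.ne' hu0
  have hq2pos : 0 < q^2 := sq_pos_of_ne' hq0
  have e1 : (c^2+s^2) * (u^2+v^2) = (r*u)^2 + (r*v)^2 := by rw [← hr2]; ring
  rw [hru, hrv] at e1
  have key : u^2 + v^2 = (q*c+p*s)^2 + (q*s+p*c)^2 := by
    have e2 : (c^2+s^2) * (u^2+v^2) = (c^2+s^2) * ((q*c+p*s)^2 + (q*s+p*c)^2) := by
      rw [e1]; linear_combination (-q^2*(c^2 - s^2 + 1)) * hcs
    exact mul_left_cancel₀ (by positivity) e2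
  have hq2 : q^2 = (c^2+s^2) * u^2 := by rw [← hru]; rw [mul_pow, hr2]
  have hcond1 : (q*c+p*s)^2 + (q*s+p*c)^2 ≤ 3 := key ▸ h1
  have hmain : c^2 + s^2 ≤ q^2 * (16/5 - (q*c+p*s)^2 - (q*s+p*c)^2) := by
    have h3 : q^2 * (16/5 - (q*c+p*s)^2 - (q*s+p*c)^2)
        = (c^2+s^2) * (u^2 * (16/5 - u^2 - v^2)) := by
      rw [hq2]; linear_combination ((c^2+s^2)*u^2) * key
    rw [h3]
    nlinarith [h2, (show (0:ℝ) < c^2+s^2 by positivity)]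
  have hfrac : (c^2+s^2)/q^2 ≤ 16/5 - (q*c+p*s)^2 - (q*s+p*c)^2 := by
    rw [div_le_iff₀ hq2pos]; linarith [hmain]
  have hqlb : (c^2+s^2) * (5/16) ≤ q^2 := by
    nlinarith [sq_nonneg (q*c+p*s), sq_nonneg (q*s+p*c)]
  have hsq2 : s^2/q^2 ≤ 8/5 := by
    rw [div_le_iff₀ hq2pos]; linarith
  have hYle : (q*c+p*s)^2 + s^2/q^2 ≤ 23/5 := by
    linarith [sq_nonneg (q*s+p*c)]
  have hYpos : 0 < (q*c+p*s)^2 + s^2/q^2 := by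
    rcases eq_or_ne s 0 with hs0 | hs0
    · have hc1 : c = 1 := eq_one_of_sq' hcpos (by rw [hs0] at hcs; linarith)
      have hQq : q*c+p*s = q := by rw [hc1, hs0]; ring
      rw [hQq, hs0]
      have := sq_pos_of_ne' hq0
      positivity
    · have hss : 0 < s^2/q^2 := div_pos (sq_pos_of_ne' hs0) hq2pos
      positivity
  have hinv : 5/23 ≤ 1/((q*c+p*s)^2 + s^2/q^2) := by
    rw [le_div_iff₀ hYpos]; linarith
  have hpq : (q*s+p*c)^2 - (q*c+p*s)^2 = p^2 - q^2 := by
    linear_combination (p^2 - q^2) * hcs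
  refine ⟨hq0, hcond1, ?_⟩
  have e3 : 2 * ((q*c+p*s)^2 + s^2/q^2) + p^2 - q^2 + 1/q^2
      = (q*c+p*s)^2 + (q*s+p*c)^2 + (c^2+s^2)/q^2 := by
    linear_combination (-1 : ℝ) * hpq - (1/q^2) * hcs
  rw [sub_le_iff_le_add, e3]
  linarith

private lemma vol_V' {r c s a b h : ℝ} (hr : 0 < r) (hab : a ≤ b) (hh : 0 ≤ h)
    (hr2 : r^2 = c^2 + s^2) :
    volume (regionBetween (fun y => (-(r*h) - 2*c*s*y)/(c^2+s^2))
      (fun y => ((r*h) - 2*c*s*y)/(c^2+s^2)) (Ioc (r*a) (r*b)))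
      = ENNReal.ofReal ((b - a) * (2*h)) := by
  have hcs2 : (0:ℝ) < c^2+s^2 := by rw [← hr2]; positivity
  have hf : Continuous fun y : ℝ => (-(r*h) - 2*c*s*y)/(c^2+s^2) := by continuity
  have hg : Continuous fun y : ℝ => ((r*h) - 2*c*s*y)/(c^2+s^2) := by continuity
  rw [Measure.volume_eq_prod ℝ ℝ,
    volume_regionBetween_eq_integral (hf.integrableOn_Ioc) (hg.integrableOn_Ioc)
      measurableSet_Ioc (fun y _ => by
        rw [div_le_div_iff_of_pos_right hcs2]
        nlinarith)]
  have hgf : ((fun y : ℝ => ((r*h) - 2*c*s*y)/(c^2+s^2))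
      - (fun y : ℝ => (-(r*h) - 2*c*s*y)/(c^2+s^2))) = fun _ : ℝ => 2*h/r := by
    funext y
    simp only [Pi.sub_apply]
    rw [← hr2]
    field_simp
    ring
  rw [hgf, setIntegral_const, measureReal_def, Real.volume_Ioc,
    ENNReal.toReal_ofReal (by nlinarith), smul_eq_mul]
  congr 1
  field_simp

private noncomputable def Afun : ℕ → ℝ := fun n => 3/5 + n * (109/1200)

private noncomputable def Hfun : ℕ → ℝ
  | 0 => 249/1000 | 1 => 99/125 | 2 => 39/40 | 3 => 53/50 | 4 => 109/100
  | 5 => 1061/1000 | 6 => 126/125 | 7 => 933/1000 | 8 => 104/125 | 9 => 87/125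
  | 10 => 501/1000 | _ => 0

/-- Proposition 6.5(i), second bound: the rescaled characteristic-function
classical fidelity for the inverted oscillator satisfies `G̃_C(t) ≥ 1/3`. -/
theorem classical_fidelity_IHO_rescaled_char_lower_bound (t : ℝ) :
    (1 : ℝ) / 3 ≤
      (1 / (3 * Real.pi)) * (volume {x : ℝ × ℝ | x.1 ≠ 0 ∧
        (x.1 * Real.cosh t + x.2 * Real.sinh t) ^ 2
          + (x.1 * Real.sinh t + x.2 * Real.cosh t) ^ 2 ≤ 3 ∧
        2 * ((x.1 * Real.cosh t + x.2 * Real.sinh t) ^ 2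
            + (Real.sinh t) ^ 2 / x.1 ^ 2)
          + x.2 ^ 2 - x.1 ^ 2 + 1 / x.1 ^ 2
          - 1 / ((x.1 * Real.cosh t + x.2 * Real.sinh t) ^ 2
              + (Real.sinh t) ^ 2 / x.1 ^ 2) ≤ 3}).toReal := by
  set c := Real.cosh t with hcdef
  set s := Real.sinh t with hsdef
  set S : Set (ℝ × ℝ) := {x : ℝ × ℝ | x.1 ≠ 0 ∧
        (x.1 * c + x.2 * s) ^ 2 + (x.1 * s + x.2 * c) ^ 2 ≤ 3 ∧
        2 * ((x.1 * c + x.2 * s) ^ 2 + s ^ 2 / x.1 ^ 2)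
          + x.2 ^ 2 - x.1 ^ 2 + 1 / x.1 ^ 2
          - 1 / ((x.1 * c + x.2 * s) ^ 2 + s ^ 2 / x.1 ^ 2) ≤ 3} with hSdef
  have hcs : c^2 - s^2 = 1 := Real.cosh_sq_sub_sinh_sq t
  have hcpos : 0 < c := Real.cosh_pos t
  set r : ℝ := Real.sqrt (c^2 + s^2) with hrdef
  have hr2 : r^2 = c^2 + s^2 := Real.sq_sqrt (by positivity)
  have hrpos : 0 < r := Real.sqrt_pos.2 (by positivity)
  have hcs2 : (0:ℝ) < c^2+s^2 := by positivity
  -- the good rectangles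
  set V : Fin 11 → Set (ℝ × ℝ) := fun i =>
    regionBetween (fun y => (-(r * Hfun i) - 2*c*s*y)/(c^2+s^2))
      (fun y => ((r * Hfun i) - 2*c*s*y)/(c^2+s^2))
      (Ioc (r * Afun i) (r * Afun (i+1))) with hVdef
  have hnum : ∀ i : Fin 11, 0 < Afun i ∧ 0 ≤ Hfun i ∧
      (Afun i)^2 + 1/(Afun i)^2 + (Hfun i)^2 ≤ 16/5 ∧
      (Afun (i+1))^2 + 1/(Afun (i+1))^2 + (Hfun i)^2 ≤ 16/5 ∧
      (Afun (i+1))^2 + (Hfun i)^2 ≤ 3 := by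
    intro i; fin_cases i <;> norm_num [Afun, Hfun]
  have hAmono : ∀ m n : ℕ, m ≤ n → Afun m ≤ Afun n := by
    intro m n hmn
    have : (m:ℝ) ≤ n := Nat.cast_le.2 hmn
    simp only [Afun]
    nlinarith
  -- data extraction from V i
  have hVdata : ∀ (i : Fin 11) (z : ℝ × ℝ), z ∈ V i → ∃ u v : ℝ,
      r*u = z.1 ∧ r*v = 2*c*s*z.1 + (c^2+s^2)*z.2 ∧
      u^2 + v^2 ≤ 3 ∧ 1 ≤ u^2 * (16/5 - u^2 - v^2) := by
    intro i z hz
    obtain ⟨hz1, hz2⟩ := hz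
    refine ⟨z.1/r, (2*c*s*z.1 + (c^2+s^2)*z.2)/r, by field_simp, by field_simp, ?_⟩
    have hua : Afun i < z.1/r := by
      rw [lt_div_iff₀ hrpos]
      calc Afun ↑i * r = r * Afun ↑i := mul_comm _ _
      _ < z.1 := hz1.1
    have hub : z.1/r ≤ Afun (↑i+1) := by
      rw [div_le_iff₀ hrpos]
      calc z.1 ≤ r * Afun (↑i+1) := hz1.2
      _ = Afun (↑i+1) * r := mul_comm _ _
    have hlo : -(r * Hfun i) < 2*c*s*z.1 + (c^2+s^2)*z.2 := by
      have h := hz2.1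
      rw [div_lt_iff₀ hcs2] at h
      nlinarith
    have hhi : 2*c*s*z.1 + (c^2+s^2)*z.2 < r * Hfun i := by
      have h := hz2.2
      rw [lt_div_iff₀ hcs2] at h
      nlinarith
    have hv2 : ((2*c*s*z.1 + (c^2+s^2)*z.2)/r)^2 ≤ (Hfun i)^2 := by
      rw [div_pow]
      rw [div_le_iff₀ (by positivity)]
      nlinarith
    obtain ⟨_, hh0, h2, h3, h4⟩ := hnum i
    exact rect_mem' (hnum i).1 h2 h3 h4 hua hub hv2
  have hVsub : ∀ i : Fin 11, V i ⊆ S := by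
    intro i x hx
    obtain ⟨u, v, hru, hrv, h1, h2⟩ := hVdata i x hx
    exact mem_target_core' hcs hcpos hr2 hrpos hru hrv h1 h2
  have hV'sub : ∀ i : Fin 11, (Neg.neg ⁻¹' V i : Set (ℝ × ℝ)) ⊆ S := by
    intro i x hx
    obtain ⟨u, v, hru, hrv, h1, h2⟩ := hVdata i (-x) hx
    have hx1 : (-x).1 = -x.1 := rfl
    have hx2 : (-x).2 = -x.2 := rfl
    rw [hx1] at hru
    rw [hx1, hx2] at hrv
    refine mem_target_core' hcs hcpos hr2 hrpos (u := -u) (v := -v)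
      (by linarith [hru]; ) (by linear_combination -hrv) ?_ ?_
    · rw [neg_sq, neg_sq]; exact h1
    · rw [neg_sq, neg_sq]; exact h2
  -- volumes
  have hVvol : ∀ i : Fin 11, volume (V i) = ENNReal.ofReal ((109/1200) * (2 * Hfun i)) := by
    intro i
    rw [hVdef]
    have hab : Afun ↑i ≤ Afun (↑i+1) := hAmono _ _ (Nat.le_succ _)
    rw [vol_V' hrpos hab (hnum i).2.1 hr2]
    congr 1
    have : Afun (↑i+1) - Afun ↑i = 109/1200 := by
      simp only [Afun]
      push_cast
      ring
    rw [this]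
  have hVmeas : ∀ i : Fin 11, MeasurableSet (V i) := by
    intro i
    exact measurableSet_regionBetween
      (Continuous.measurable (by continuity)) (Continuous.measurable (by continuity))
      measurableSet_Ioc
  have hVpos : ∀ i : Fin 11, ∀ x ∈ V i, 0 < x.1 := by
    intro i x hx
    have h1 : r * Afun ↑i < x.1 := hx.1.1
    have h2 : 0 < Afun ↑i := (hnum i).1
    nlinarith
  have hVdisj : ∀ i j : Fin 11, i < j → Disjoint (V i) (V j) := by
    intro i j hij
    rw [Set.disjoint_left]
    intro x hxi hxj
    have h1 : x.1 ≤ r * Afun (↑i+1) := hxi.1.2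
    have h2 : r * Afun ↑j < x.1 := hxj.1.1
    have h3 : Afun (↑i+1) ≤ Afun ↑j := hAmono _ _ hij
    nlinarith
  have hpair : Pairwise (Function.onFun Disjoint V) := by
    intro i j hij
    rcases lt_or_gt_of_ne hij with h | h
    · exact hVdisj i j h
    · exact (hVdisj j i h).symm
  set U : Set (ℝ × ℝ) := ⋃ i, V i with hUdef
  have hUmeas : MeasurableSet U := MeasurableSet.iUnion hVmeas
  have hU'meas : MeasurableSet (Neg.neg ⁻¹' U : Set (ℝ × ℝ)) :=
    hUmeas.preimage measurable_neg
  have hUvol : volume U = ENNReal.ofReal (1002473/600000) := by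
    rw [hUdef, measure_iUnion hpair hVmeas, tsum_fintype]
    simp_rw [hVvol]
    rw [← ENNReal.ofReal_sum_of_nonneg (by intro i _; fin_cases i <;> norm_num [Hfun])]
    congr 1
    simp [Fin.sum_univ_succ, Hfun]
    norm_num
  have hUS : U ⊆ S := iUnion_subset hVsub
  have hU'S : (Neg.neg ⁻¹' U : Set (ℝ × ℝ)) ⊆ S := by
    intro x hx
    rw [hUdef] at hx
    obtain ⟨w, ⟨i, hi⟩, hw⟩ := hx
    exact hV'sub i (by rw [← hi] at hw; exact hw)
  have hdisjUU : Disjoint U (Neg.neg ⁻¹' U : Set (ℝ × ℝ)) := by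
    rw [Set.disjoint_left]
    intro x hx hx'
    obtain ⟨w, ⟨i, hi⟩, hw⟩ := hx
    have hp1 : 0 < x.1 := hVpos i x (by rw [← hi] at hw; exact hw)
    obtain ⟨w', ⟨j, hj⟩, hw'⟩ := hx'
    have hp2 : 0 < (-x).1 := hVpos j (-x) (by rw [← hj] at hw'; exact hw')
    have : (-x).1 = -x.1 := rfl
    rw [this] at hp2
    linarith
  -- finiteness of volume S
  have hSbd : S ⊆ Icc (-(2*(c+|s|))) (2*(c+|s|)) ×ˢ Icc (-(2*(c+|s|))) (2*(c+|s|)) := by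
    intro x hx
    obtain ⟨hq0, h1, _⟩ := hx
    have hQ2 : (x.1*c + x.2*s)^2 ≤ 4 := by nlinarith [sq_nonneg (x.1*s + x.2*c)]
    have hP2 : (x.1*s + x.2*c)^2 ≤ 4 := by nlinarith [sq_nonneg (x.1*c + x.2*s)]
    have hQb : -2 ≤ x.1*c + x.2*s ∧ x.1*c + x.2*s ≤ 2 := by
      constructor <;> nlinarith
    have hPb : -2 ≤ x.1*s + x.2*c ∧ x.1*s + x.2*c ≤ 2 := by
      constructor <;> nlinarith
    have hid1 : x.1 = c*(x.1*c + x.2*s) - s*(x.1*s + x.2*c) := by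
      linear_combination (-x.1) * hcs
    have hid2 : x.2 = -s*(x.1*c + x.2*s) + c*(x.1*s + x.2*c) := by
      linear_combination (-x.2) * hcs
    constructor
    · constructor
      · rcases abs_cases s with ⟨ha1, ha2⟩ | ⟨ha1, ha2⟩ <;> nlinarith
      · rcases abs_cases s with ⟨ha1, ha2⟩ | ⟨ha1, ha2⟩ <;> nlinarith
    · constructor
      · rcases abs_cases s with ⟨ha1, ha2⟩ | ⟨ha1, ha2⟩ <;> nlinarith
      · rcases abs_cases s with ⟨ha1, ha2⟩ | ⟨ha1, ha2⟩ <;> nlinarith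
  have hSfin : volume S ≠ ⊤ := by
    apply ne_top_of_le_ne_top ?_ (measure_mono hSbd)
    rw [Measure.volume_eq_prod ℝ ℝ, Measure.prod_prod, Real.volume_Icc]
    exact (ENNReal.mul_lt_top ENNReal.ofReal_lt_top ENNReal.ofReal_lt_top).ne
  -- main volume bound
  have hUvol' : volume (Neg.neg ⁻¹' U : Set (ℝ × ℝ)) = volume U :=
    Measure.measure_preimage_neg volume U
  have hvol2 : ENNReal.ofReal (1002473/300000) ≤ volume S := by
    have hle : volume (U ∪ (Neg.neg ⁻¹' U : Set (ℝ × ℝ))) ≤ volume S :=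
      measure_mono (union_subset hUS hU'S)
    rw [measure_union hdisjUU hU'meas, hUvol', hUvol] at hle
    rw [← ENNReal.ofReal_add (by norm_num) (by norm_num)] at hle
    calc ENNReal.ofReal (1002473/300000)
        = ENNReal.ofReal (1002473/600000 + 1002473/600000) := by norm_num
    _ ≤ volume S := hle
  have hπT : Real.pi ≤ (volume S).toReal := by
    have h1 : (ENNReal.ofReal (1002473/300000)).toReal ≤ (volume S).toReal :=
      ENNReal.toReal_mono hSfin hvol2
    rw [ENNReal.toReal_ofReal (by norm_num)] at h1
    nlinarith [Real.pi_lt_d6]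
  have hπ : 0 < Real.pi := Real.pi_pos
  calc (1:ℝ)/3 = (1/(3*Real.pi)) * Real.pi := by field_simp
  _ ≤ (1/(3*Real.pi)) * (volume S).toReal :=
      mul_le_mul_of_nonneg_left hπT (by positivity)
end

section
/- Define G̃_C(∞) := (1/(3π)) · vol{(u,v) ∈ ℝ² : u ≠ 0, u² + v² ≤ 3, and u² + v² + 1/u² - 2/((u+v)² + 1/u²) ≤ 3}, where vol denotes two-dimensional Lebesgue measure. Then G̃_C(∞) ≤ 2·arctan(√17)/π - √17/(9π). -/
open MeasureTheory

open Set


noncomputable def gfun (u : ℝ) : ℝ := Real.sqrt (3 - u ^ 2)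

noncomputable def Ffun (u : ℝ) : ℝ := u * gfun u + 3 * Real.arcsin (u / Real.sqrt 3)

lemma gfun_cont : Continuous gfun := by
  unfold gfun
  exact (continuous_const.sub (continuous_pow 2)).sqrt

lemma Ffun_cont : Continuous Ffun := by
  unfold Ffun
  exact (continuous_id.mul gfun_cont).add
    (continuous_const.mul (Real.continuous_arcsin.comp (continuous_id.div_const _)))

lemma hasDerivAt_Ffun {x : ℝ} (hx : x ^ 2 < 3) : HasDerivAt Ffun (2 * gfun x) x := by
  have hc : (0:ℝ) < 3 - x ^ 2 := by linarith
  set c := Real.sqrt (3 - x ^ 2) with hcdef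
  have hcpos : 0 < c := Real.sqrt_pos.mpr hc
  have hcsq : c ^ 2 = 3 - x ^ 2 := Real.sq_sqrt hc.le
  have h3 : (0:ℝ) < Real.sqrt 3 := Real.sqrt_pos.mpr (by norm_num)
  have h3sq : Real.sqrt 3 ^ 2 = 3 := Real.sq_sqrt (by norm_num)
  -- derivative of sqrt (3 - u^2)
  have hinner : HasDerivAt (fun u : ℝ => 3 - u ^ 2) (-(2 * x)) x := by
    simpa using (hasDerivAt_pow 2 x).const_sub 3
  have hsqrt : HasDerivAt (fun u : ℝ => Real.sqrt (3 - u ^ 2))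
      (1 / (2 * c) * (-(2 * x))) x :=
    (Real.hasDerivAt_sqrt hc.ne').comp x hinner
  have hprod : HasDerivAt (fun u : ℝ => u * Real.sqrt (3 - u ^ 2))
      (1 * c + x * (1 / (2 * c) * (-(2 * x)))) x := by
    exact (hasDerivAt_id' x).mul hsqrt
  -- derivative of arcsin (u / √3)
  have hxlt : |x / Real.sqrt 3| < 1 := by
    rw [abs_div, abs_of_pos h3, div_lt_one h3]
    have : |x| ^ 2 < Real.sqrt 3 ^ 2 := by rw [h3sq, sq_abs]; exact hx
    exact lt_of_pow_lt_pow_left₀ 2 h3.le this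
  have harg : HasDerivAt (fun u : ℝ => u / Real.sqrt 3) (1 / Real.sqrt 3) x := by
    simpa [div_eq_mul_inv, one_div] using (hasDerivAt_id x).div_const (Real.sqrt 3)
  have harcsin : HasDerivAt (fun u : ℝ => Real.arcsin (u / Real.sqrt 3))
      (1 / Real.sqrt (1 - (x / Real.sqrt 3) ^ 2) * (1 / Real.sqrt 3)) x :=
    (Real.hasDerivAt_arcsin (by intro h; rw [h] at hxlt; norm_num at hxlt)
      (by intro h; rw [h] at hxlt; norm_num at hxlt)).comp x harg
  have key : HasDerivAt Ffun
      ((1 * c + x * (1 / (2 * c) * (-(2 * x)))) +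
        3 * (1 / Real.sqrt (1 - (x / Real.sqrt 3) ^ 2) * (1 / Real.sqrt 3))) x := by
    unfold Ffun
    exact hprod.add (harcsin.const_mul 3)
  convert key using 1
  have hsq13 : Real.sqrt (1 - (x / Real.sqrt 3) ^ 2) = c / Real.sqrt 3 := by
    rw [div_pow, h3sq, hcdef, ← Real.sqrt_div hc.le]
    congr 1
    field_simp
  rw [hsq13]
  have h1 : gfun x = c := rfl
  have h2 : 1 / (c / Real.sqrt 3) * (1 / Real.sqrt 3) = 1 / c := by
    rw [one_div_div]
    field_simp
  rw [h1, h2]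
  field_simp
  linear_combination hcsq


lemma ftc {p q : ℝ} (hp : -Real.sqrt 3 ≤ p) (hpq : p ≤ q) (hq : q ≤ Real.sqrt 3) :
    ∫ u in p..q, 2 * gfun u = Ffun q - Ffun p := by
  apply intervalIntegral.integral_eq_sub_of_hasDeriv_right_of_le hpq
    Ffun_cont.continuousOn (fun x hx => ?_)
    ((continuous_const.mul gfun_cont).intervalIntegrable p q)
  have h1 : -Real.sqrt 3 < x := lt_of_le_of_lt hp hx.1
  have h2 : x < Real.sqrt 3 := lt_of_lt_of_le hx.2 hq
  have hx2 : x ^ 2 < 3 := by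
    have := sq_lt_sq' h1 h2
    rwa [Real.sq_sqrt (by norm_num : (0:ℝ) ≤ 3)] at this
  exact (hasDerivAt_Ffun hx2).hasDerivWithinAt

lemma Ffun_sqrt3 : Ffun (Real.sqrt 3) = 3 * (Real.pi / 2) := by
  have h3 : Real.sqrt 3 ≠ 0 := ne_of_gt (Real.sqrt_pos.mpr (by norm_num))
  unfold Ffun gfun
  rw [Real.sq_sqrt (by norm_num : (0:ℝ) ≤ 3), div_self h3, Real.arcsin_one]
  norm_num

lemma Ffun_neg (u : ℝ) : Ffun (-u) = -Ffun u := by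
  simp [Ffun, gfun, neg_div, Real.arcsin_neg]
  ring

lemma part1 : (Real.sqrt 6)⁻¹ * gfun ((Real.sqrt 6)⁻¹) = Real.sqrt 17 / 6 := by
  unfold gfun
  rw [inv_pow, Real.sq_sqrt (by norm_num : (0:ℝ) ≤ 6), ← Real.sqrt_inv,
    ← Real.sqrt_mul (by norm_num : (0:ℝ) ≤ 6⁻¹),
    show (6:ℝ)⁻¹ * (3 - 6⁻¹) = 17 / 36 by norm_num,
    Real.sqrt_div (by norm_num : (0:ℝ) ≤ 17),
    show (36:ℝ) = 6 ^ 2 by norm_num, Real.sqrt_sq (by norm_num : (0:ℝ) ≤ 6)]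

lemma part2 : Real.arcsin ((Real.sqrt 6)⁻¹ / Real.sqrt 3)
    = Real.pi / 2 - Real.arctan (Real.sqrt 17) := by
  have h18 : ((Real.sqrt 6)⁻¹ / Real.sqrt 3 : ℝ) = Real.sqrt 18⁻¹ := by
    rw [← Real.sqrt_inv, ← Real.sqrt_div (by norm_num : (0:ℝ) ≤ 6⁻¹)]
    norm_num
  rw [h18]
  have hmem : Real.sqrt 18⁻¹ ∈ Set.Ioo (-(1:ℝ)) 1 := by
    constructor
    · linarith [Real.sqrt_nonneg (18⁻¹ : ℝ)]
    · rw [show (1:ℝ) = Real.sqrt 1 by simp]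
      exact Real.sqrt_lt_sqrt (by norm_num) (by norm_num)
  rw [Real.arcsin_eq_arctan hmem, Real.sq_sqrt (by norm_num : (0:ℝ) ≤ 18⁻¹),
    show (1:ℝ) - 18⁻¹ = 17 / 18 by norm_num]
  have hq : Real.sqrt 18⁻¹ / Real.sqrt (17 / 18) = (Real.sqrt 17)⁻¹ := by
    rw [← Real.sqrt_div (by norm_num : (0:ℝ) ≤ 18⁻¹),
      show ((18:ℝ)⁻¹ / (17 / 18)) = 17⁻¹ by norm_num, Real.sqrt_inv]
  rw [hq, Real.arctan_inv_of_pos (Real.sqrt_pos.mpr (by norm_num))]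

lemma Ffun_a : Ffun ((Real.sqrt 6)⁻¹)
    = Real.sqrt 17 / 6 + 3 * (Real.pi / 2 - Real.arctan (Real.sqrt 17)) := by
  unfold Ffun
  rw [part1, part2]

noncomputable def aa : ℝ := (Real.sqrt 6)⁻¹
noncomputable def bb : ℝ := Real.sqrt 3

noncomputable def Aset : Set ℝ := Set.Icc (-bb) (-aa) ∪ Set.Icc aa bb

noncomputable def Kset : Set (ℝ × ℝ) :=
  {x | x.1 ∈ Aset ∧ x.2 ∈ Set.Icc (-(gfun x.1)) (gfun x.1)}

lemma aa_pos : 0 < aa := inv_pos.mpr (Real.sqrt_pos.mpr (by norm_num))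

lemma aa_le_bb : aa ≤ bb := by
  rw [aa, bb, ← Real.sqrt_inv]
  exact Real.sqrt_le_sqrt (by norm_num)

lemma measurable_Aset : MeasurableSet Aset :=
  (measurableSet_Icc.union measurableSet_Icc)

lemma measurable_Kset : MeasurableSet Kset := by
  have h1 : MeasurableSet {x : ℝ × ℝ | x.1 ∈ Aset} :=
    measurable_Aset.preimage measurable_fst
  have h2 : MeasurableSet {x : ℝ × ℝ | -(gfun x.1) ≤ x.2} :=
    measurableSet_le ((gfun_cont.comp continuous_fst).neg.measurable) measurable_snd
  have h3 : MeasurableSet {x : ℝ × ℝ | x.2 ≤ gfun x.1} :=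
    measurableSet_le measurable_snd (gfun_cont.comp continuous_fst).measurable
  have : Kset = ({x : ℝ × ℝ | x.1 ∈ Aset} ∩ {x : ℝ × ℝ | -(gfun x.1) ≤ x.2})
      ∩ {x : ℝ × ℝ | x.2 ≤ gfun x.1} := by
    ext x
    simp only [Kset, Set.mem_setOf_eq, Set.mem_Icc, Set.mem_inter_iff]
    tauto
  rw [this]
  exact (h1.inter h2).inter h3

lemma volume_Kset : volume Kset
    = ENNReal.ofReal (6 * Real.arctan (Real.sqrt 17) - Real.sqrt 17 / 3) := by
  have hsec : ∀ u : ℝ, volume (Prod.mk u ⁻¹' Kset)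
      = Aset.indicator (fun u => ENNReal.ofReal (2 * gfun u)) u := by
    intro u
    by_cases hu : u ∈ Aset
    · have : Prod.mk u ⁻¹' Kset = Set.Icc (-(gfun u)) (gfun u) := by
        ext v; simp [Kset, hu]
      rw [this, Real.volume_Icc, Set.indicator_of_mem hu]
      congr 1; ring
    · have : Prod.mk u ⁻¹' Kset = ∅ := by
        ext v; simp [Kset, hu]
      rw [this, Set.indicator_of_notMem hu]; simp
  have hint : IntegrableOn (fun u => 2 * gfun u) Aset := by
    apply IntegrableOn.union <;>
      exact (continuous_const.mul gfun_cont).integrableOn_Icc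
  have key : volume Kset = ENNReal.ofReal (∫ u in Aset, 2 * gfun u) := by
    rw [MeasureTheory.Measure.volume_eq_prod, Measure.prod_apply measurable_Kset]
    rw [lintegral_congr hsec, lintegral_indicator measurable_Aset]
    rw [← ofReal_integral_eq_lintegral_ofReal hint
      (Filter.Eventually.of_forall (fun u => by
        unfold gfun; positivity))]
  rw [key]
  congr 1
  have hd : Disjoint (Set.Icc (-bb) (-aa)) (Set.Icc aa bb) := by
    apply Set.disjoint_left.mpr
    intro x hx1 hx2
    have := aa_pos
    have := hx1.2
    have := hx2.1
    linarith
  rw [Aset, setIntegral_union (f := fun u => 2 * gfun u) hd measurableSet_Icc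
    ((continuous_const.mul gfun_cont).integrableOn_Icc)
    ((continuous_const.mul gfun_cont).integrableOn_Icc)]
  have hb0 : (0:ℝ) ≤ bb := Real.sqrt_nonneg 3
  have i1 : ∫ u in Set.Icc (-bb) (-aa), 2 * gfun u = Ffun (-aa) - Ffun (-bb) := by
    rw [MeasureTheory.integral_Icc_eq_integral_Ioc,
      ← intervalIntegral.integral_of_le (by linarith [aa_le_bb] : -bb ≤ -aa)]
    exact ftc (le_of_eq (by rw [bb])) (by linarith [aa_le_bb])
      (by linarith [aa_pos, Real.sqrt_nonneg 3])
  have i2 : ∫ u in Set.Icc aa bb, 2 * gfun u = Ffun bb - Ffun aa := by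
    rw [MeasureTheory.integral_Icc_eq_integral_Ioc,
      ← intervalIntegral.integral_of_le aa_le_bb]
    exact ftc (by linarith [aa_pos, Real.sqrt_nonneg 3]) aa_le_bb (le_of_eq (by rw [bb]))
  rw [i1, i2, Ffun_neg, Ffun_neg, bb, Ffun_sqrt3, aa, Ffun_a]
  ring

lemma subset_Kset : {x : ℝ × ℝ | x.1 ≠ 0 ∧
    x.1 ^ 2 + x.2 ^ 2 ≤ 3 ∧
    x.1 ^ 2 + x.2 ^ 2 + 1 / x.1 ^ 2
      - 2 / ((x.1 + x.2) ^ 2 + 1 / x.1 ^ 2) ≤ 3} ⊆ Kset := by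
  rintro x ⟨hx0, h1, h2⟩
  have hu2 : 0 < x.1 ^ 2 := lt_of_le_of_ne (sq_nonneg _) (Ne.symm (pow_ne_zero 2 hx0))
  have hDpos : 0 < (x.1 + x.2) ^ 2 + 1 / x.1 ^ 2 := by positivity
  have hinv : x.1 ^ 2 * (1 / x.1 ^ 2) = 1 := by field_simp
  have hkey : 2 / ((x.1 + x.2) ^ 2 + 1 / x.1 ^ 2) ≤ 2 * x.1 ^ 2 := by
    rw [div_le_iff₀ hDpos]
    nlinarith [mul_nonneg (sq_nonneg x.1) (sq_nonneg (x.1 + x.2))]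
  have hstep : 1 / x.1 ^ 2 ≤ 3 + x.1 ^ 2 := by nlinarith [sq_nonneg x.2]
  have h16 : 1 ≤ (3 + x.1 ^ 2) * x.1 ^ 2 := by rwa [div_le_iff₀ hu2] at hstep
  have hu3 : x.1 ^ 2 ≤ 3 := by nlinarith [sq_nonneg x.2]
  have h6 : (6:ℝ)⁻¹ ≤ x.1 ^ 2 := by nlinarith
  have habs1 : aa ≤ |x.1| := by
    rw [aa, ← Real.sqrt_inv, ← Real.sqrt_sq_eq_abs]
    exact Real.sqrt_le_sqrt h6
  have habs2 : |x.1| ≤ bb := by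
    rw [bb, ← Real.sqrt_sq_eq_abs]
    exact Real.sqrt_le_sqrt hu3
  constructor
  · rcases le_or_gt 0 x.1 with h | h
    · right
      rw [abs_of_nonneg h] at habs1 habs2
      exact ⟨habs1, habs2⟩
    · left
      rw [abs_of_neg h] at habs1 habs2
      constructor <;> linarith
  · have hv : |x.2| ≤ gfun x.1 := by
      rw [← Real.sqrt_sq_eq_abs, gfun]
      exact Real.sqrt_le_sqrt (by linarith)
    exact abs_le.mp hv

/-- Proposition 6.5(ii): the limiting value of the rescaled characteristic-function
classical fidelity for the inverted oscillator satisfies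
`G̃_C(∞) ≤ 2 arctan(√17)/π - √17/(9π)`. -/
theorem classical_fidelity_IHO_limit_upper_bound :
    (1 / (3 * Real.pi)) * (volume {x : ℝ × ℝ | x.1 ≠ 0 ∧
        x.1 ^ 2 + x.2 ^ 2 ≤ 3 ∧
        x.1 ^ 2 + x.2 ^ 2 + 1 / x.1 ^ 2
          - 2 / ((x.1 + x.2) ^ 2 + 1 / x.1 ^ 2) ≤ 3}).toReal
      ≤ 2 * Real.arctan (Real.sqrt 17) / Real.pi
          - Real.sqrt 17 / (9 * Real.pi) := by
  have hmono := measure_mono (μ := (volume : Measure (ℝ × ℝ))) subset_Kset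
  rw [volume_Kset] at hmono
  have hπ : 0 < Real.pi := Real.pi_pos
  have h3 : (3:ℝ) < Real.pi := Real.pi_gt_three
  have h17a : (1:ℝ) < Real.sqrt 17 := by
    rw [show (1:ℝ) = Real.sqrt 1 by simp]
    exact Real.sqrt_lt_sqrt (by norm_num) (by norm_num)
  have h17b : Real.sqrt 17 ≤ 5 := by
    rw [show (5:ℝ) = Real.sqrt 25 by
      rw [show (25:ℝ) = 5 ^ 2 by norm_num, Real.sqrt_sq (by norm_num : (0:ℝ) ≤ 5)]]
    exact Real.sqrt_le_sqrt (by norm_num)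
  have harctan : Real.pi / 4 ≤ Real.arctan (Real.sqrt 17) := by
    rw [← Real.arctan_one]
    exact le_of_lt (Real.arctan_strictMono h17a)
  have hC : 0 ≤ 6 * Real.arctan (Real.sqrt 17) - Real.sqrt 17 / 3 := by linarith
  have htr := ENNReal.toReal_mono ENNReal.ofReal_ne_top hmono
  rw [ENNReal.toReal_ofReal hC] at htr
  calc (1 / (3 * Real.pi)) * _ ≤ (1 / (3 * Real.pi))
        * (6 * Real.arctan (Real.sqrt 17) - Real.sqrt 17 / 3) :=
      mul_le_mul_of_nonneg_left htr (by positivity)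
    _ = 2 * Real.arctan (Real.sqrt 17) / Real.pi - Real.sqrt 17 / (9 * Real.pi) := by
      field_simp
      ring
end
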